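/- Let Ĝ and G̃ be two distinct but Markov equivalent directed trees on the same vertex set, i.e., two distinct directed trees with the same skeleton. Then Ĝ and G̃ share exactly the same directed edges except for a single directed path between the two root nodes: the unique directed path in Ĝ from rt(Ĝ) to rt(G̃), namely rt(Ĝ) = c_1 → c_2 → ⋯ → c_{r−1} → c_r = rt(G̃), appears in G̃ as the reversed path c_r → c_{r−1} → ⋯ → c_2 → c_1, and every edge of Ĝ not on this path is an edge of G̃ with the same orientation. -/

import Mathlib

/-!
Follow the parent pointers of `G̃` upwards from `rt(Ĝ)`. Every vertex `u` reached this way has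
its `Ĝ`-parent edge reversed in `G̃` (vacuously at `rt(Ĝ)`), so the `G̃`-parent `v` of `u` cannot
be the `Ĝ`-parent of `u` without a 2-cycle in `G̃`; sharing the skeleton, `Ĝ` therefore has the
edge `u → v`. Hence the climb traces a directed `Ĝ`-path from `rt(Ĝ)` to `rt(G̃)`, reversed in `G̃`.
Conversely, for a reversed edge `a → b` the edge from `a`'s `Ĝ`-parent into `a` is reversed as
well, so induction from the root of `Ĝ` places `a` on the climb. All other edges keep their
orientation because the skeleta agree.
-/

noncomputable section

structure DirTree (p : ℕ) where
  par : Fin p → Option (Fin p)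
  root : Fin p
  par_root : par root = none
  root_unique : ∀ i, par i = none → i = root
  depth : Fin p → ℕ
  depth_lt : ∀ i j, par i = some j → depth j < depth i

/-- The skeleton (undirected edge set) of a directed tree. -/
def skel {p : ℕ} (G : DirTree p) : Set (Fin p × Fin p) :=
  {e | G.par e.2 = some e.1 ∨ G.par e.1 = some e.2}

namespace DirTree

variable {p : ℕ} (G : DirTree p)

theorem par_eq_none_iff {i : Fin p} : G.par i = none ↔ i = G.root :=
  ⟨G.root_unique i, fun h => h ▸ G.par_root⟩

theorem not_par_of_par {i j : Fin p} (h : G.par i = some j) : G.par j ≠ some i := fun h' =>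
  (G.depth_lt i j h).not_gt (G.depth_lt j i h')

@[elab_as_elim]
theorem induction {P : Fin p → Prop} (root : P G.root)
    (par : ∀ i j, G.par i = some j → P j → P i) (i : Fin p) : P i := by
  induction hd : G.depth i using Nat.strong_induction_on generalizing i with
  | _ d ih =>
    cases hi : G.par i with
    | none => exact (G.par_eq_none_iff.mp hi) ▸ root
    | some j => exact par i j hi (ih _ (hd ▸ G.depth_lt i j hi) j rfl)

def parOrSelf (i : Fin p) : Fin p := (G.par i).getD i

theorem parOrSelf_of_par {i j : Fin p} (h : G.par i = some j) : G.parOrSelf i = j := by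
  simp [parOrSelf, h]

theorem iterate_parOrSelf_root (n : ℕ) : G.parOrSelf^[n] G.root = G.root :=
  Function.iterate_fixed (by simp [parOrSelf, G.par_root]) n

theorem exists_iterate_parOrSelf_eq_root (i : Fin p) : ∃ n, G.parOrSelf^[n] i = G.root := by
  induction i using G.induction with
  | root => exact ⟨0, rfl⟩
  | par i j hij ih =>
    obtain ⟨n, hn⟩ := ih
    exact ⟨n + 1, by rw [Function.iterate_succ_apply, G.parOrSelf_of_par hij, hn]⟩

theorem iterate_parOrSelf_eq_root_of_le {i : Fin p} {m n : ℕ}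
    (hm : G.parOrSelf^[m] i = G.root) (hmn : m ≤ n) : G.parOrSelf^[n] i = G.root := by
  rw [← Nat.sub_add_cancel hmn, Function.iterate_add_apply, hm, iterate_parOrSelf_root]

theorem par_iterate_parOrSelf {i : Fin p} {n : ℕ} (h : G.parOrSelf^[n] i ≠ G.root) :
    G.par (G.parOrSelf^[n] i) = some (G.parOrSelf^[n + 1] i) := by
  obtain ⟨j, hj⟩ := Option.ne_none_iff_exists'.mp (mt G.par_eq_none_iff.mp h)
  rw [hj, Function.iterate_succ_apply', G.parOrSelf_of_par hj]

end DirTree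

section SameSkeleton

variable {p : ℕ} {G H : DirTree p} (hGH : skel G = skel H)
include hGH

theorem par_or_par_of_skel_eq {a b : Fin p} (h : G.par b = some a) :
    H.par b = some a ∨ H.par a = some b := by
  have hab : (a, b) ∈ skel H := hGH ▸ Or.inl h
  exact hab

theorem exists_reversed_edge_of_par_ne (hne : G.par ≠ H.par) :
    ∃ a b, G.par b = some a ∧ H.par a = some b := by
  obtain ⟨v, hv⟩ := Function.ne_iff.mp hne
  cases hH : H.par v with
  | some w =>
    have hG := (par_or_par_of_skel_eq hGH.symm hH).resolve_left (hH ▸ hv)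
    exact ⟨v, w, hG, hH⟩
  | none =>
    obtain ⟨u, hu⟩ := Option.ne_none_iff_exists'.mp (hH ▸ hv)
    have hH' := (par_or_par_of_skel_eq hGH hu).resolve_left (hH ▸ (Option.some_ne_none u).symm)
    exact ⟨u, v, hu, hH'⟩

theorem par_of_par_of_parent_edge_reversed {u v : Fin p}
    (hu : ∀ w, G.par u = some w → H.par w = some u) (hv : H.par u = some v) :
    G.par v = some u :=
  (par_or_par_of_skel_eq hGH.symm hv).resolve_left fun h => H.not_par_of_par hv (hu v h)

theorem parent_edge_reversed_iterate_parOrSelf_root (n : ℕ) :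
    ∀ w, G.par (H.parOrSelf^[n] G.root) = some w → H.par w = some (H.parOrSelf^[n] G.root) := by
  induction n with
  | zero => simp [G.par_root]
  | succ n ih =>
    by_cases hroot : H.parOrSelf^[n] G.root = H.root
    · rw [H.iterate_parOrSelf_eq_root_of_le hroot n.le_succ, ← hroot]
      exact ih
    · have hH := H.par_iterate_parOrSelf hroot
      intro w hw
      rw [par_of_par_of_parent_edge_reversed hGH ih hH, Option.some_inj] at hw
      exact hw ▸ hH

theorem exists_iterate_parOrSelf_root_eq_of_reversed {a b : Fin p}
    (hG : G.par b = some a) (hH : H.par a = some b) : ∃ j, H.parOrSelf^[j] G.root = a := by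
  induction a using G.induction generalizing b with
  | root => exact ⟨0, rfl⟩
  | par a w haw ih =>
    have hwa : H.par w = some a := (par_or_par_of_skel_eq hGH haw).resolve_left fun h =>
      G.not_par_of_par hG (Option.some_inj.mp (hH.symm.trans h) ▸ haw)
    obtain ⟨j, hj⟩ := ih haw hwa
    exact ⟨j + 1, by rw [Function.iterate_succ_apply', hj, H.parOrSelf_of_par hwa]⟩

end SameSkeleton

/-- Lemma: Markov equivalent trees differ by a reversed root path.
Two distinct directed trees with the same skeleton share exactly the same directed
edges except for the unique directed path from `rt(Ĝ)` to `rt(G̃)` in `Ĝ`, which is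
reversed in `G̃`. -/
theorem markov_equivalent_trees_path_reversal
    {p : ℕ} (Ghat Gtil : DirTree p)
    (hskel : skel Ghat = skel Gtil) (hne : Ghat.par ≠ Gtil.par) :
    ∃ (r : ℕ) (c : ℕ → Fin p), 2 ≤ r ∧
      c 0 = Ghat.root ∧ c (r - 1) = Gtil.root ∧
      (∀ i, i + 1 < r → Ghat.par (c (i + 1)) = some (c i)) ∧
      (∀ i, i + 1 < r → Gtil.par (c i) = some (c (i + 1))) ∧
      (∀ a b : Fin p, Ghat.par b = some a →
        (¬ ∃ i, i + 1 < r ∧ c i = a ∧ c (i + 1) = b) → Gtil.par b = some a) ∧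
      (∀ a b : Fin p, Gtil.par b = some a →
        (¬ ∃ i, i + 1 < r ∧ c i = b ∧ c (i + 1) = a) → Ghat.par b = some a) := by
  set c : ℕ → Fin p := fun n => Gtil.parOrSelf^[n] Ghat.root
  have hreach := Gtil.exists_iterate_parOrSelf_eq_root Ghat.root
  set N := Nat.find hreach
  have hpath : ∀ i, i < N → Gtil.par (c i) = some (c (i + 1)) :=
    fun i hi => Gtil.par_iterate_parOrSelf (Nat.find_min hreach hi)
  have honpath : ∀ a b, Ghat.par b = some a → Gtil.par a = some b →
      ∃ i, i + 1 < N + 1 ∧ c i = a ∧ c (i + 1) = b := by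
    intro a b hG hH
    obtain ⟨j, hj⟩ := exists_iterate_parOrSelf_root_eq_of_reversed hskel hG hH
    have hjN : j < N := not_le.mp fun hNj => by
      rw [Gtil.iterate_parOrSelf_eq_root_of_le (Nat.find_spec hreach) hNj] at hj
      rw [← hj, Gtil.par_root] at hH
      exact absurd hH (Option.some_ne_none b).symm
    have hcj : c j = a := hj
    exact ⟨j, by omega, hcj, Option.some_inj.mp ((hpath j hjN).symm.trans (hcj ▸ hH))⟩
  obtain ⟨a, b, hG, hH⟩ := exists_reversed_edge_of_par_ne hskel hne
  obtain ⟨i, hi, -⟩ := honpath a b hG hH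
  refine ⟨N + 1, c, by omega, rfl, Nat.find_spec hreach, fun i hi => ?_, fun i hi => hpath i (by omega),
    fun a b hab hoff => ?_, fun a b hab hoff => ?_⟩
  · exact par_of_par_of_parent_edge_reversed hskel (parent_edge_reversed_iterate_parOrSelf_root hskel i)
      (hpath i (by omega))
  · exact (par_or_par_of_skel_eq hskel hab).resolve_right (hoff ∘ honpath a b hab)
  · exact (par_or_par_of_skel_eq hskel.symm hab).resolve_right fun h => hoff (honpath b a h hab)
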